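/- arXiv:2311.04574 — 2 statements merged into one kernel-verified Lean document; each statement's English description precedes it below -/
import Mathlib

section
/- Let Z^t_{cv} be 0/1 random variables indexed by times t and offline nodes v, evolving as follows: Z^1_{cv} = 1; conditioned on any history up to time t implying Z^t_{cv} = 1, the variable Z^{t+1}_{cv} equals 0 with probability x̄^t_{cv} := 𝟙[v ∈ N(w_t)]/(Δ - d_t(v) + q), and moreover for any set of nodes v_1,...,v_k, conditioned on any history implying all Z^t_{cv_i} = 1, the probability that all Z^{t+1}_{cv_i} = 1 is at most ∏_i (1 - x̄^t_{cv_i}). Then for all t and all v_1,...,v_k: Pr[∧_i Z^t_{cv_i} = 1] ≤ ∏_i Pr[Z^t_{cv_i} = 1]. -/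
/-- Negative dependence invariant (Lemma 1 of the paper), stated abstractly:
`P t S` denotes `Pr[∧_{v ∈ S} Z^t_{cv} = 1]`, and `x t v` denotes the
conditional probability `x̄^t_{cv}` that `v` colors an edge with `c` at time `t`.
If initially all indicators are one, the marginals satisfy
`P (t+1) {v} = (1 - x t v) · P t {v}`, and conditioned on all of
`Z^t_{c v_i} = 1` the probability that all survive is at most
`∏ (1 - x t v_i)`, then `Pr[∧ Z^t = 1] ≤ ∏ Pr[Z^t = 1]` at every time. -/
theorem negative_dependence_invariant {V : Type*} [DecidableEq V]
    (P : ℕ → Finset V → ℝ) (x : ℕ → V → ℝ)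
    (hx : ∀ t v, 0 ≤ x t v ∧ x t v ≤ 1)
    (hP0 : ∀ S, P 1 S = 1)
    (hPnonneg : ∀ t S, 0 ≤ P t S)
    (hmarg : ∀ t v, P (t + 1) {v} = (1 - x t v) * P t {v})
    (hcond : ∀ t (S : Finset V), P (t + 1) S ≤ (∏ v ∈ S, (1 - x t v)) * P t S) :
    ∀ t, 1 ≤ t → ∀ S : Finset V, P t S ≤ ∏ v ∈ S, P t {v} := by
  intro t ht
  induction t with
  | zero => omega
  | succ n ih =>
    rcases Nat.eq_or_lt_of_le ht with h1 | h1
    · intro S; rw [← h1, hP0]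
      rw [Finset.prod_congr rfl (fun v _ => hP0 {v}), Finset.prod_const_one]
    · have hn : 1 ≤ n := by omega
      intro S
      have hnn : ∀ v ∈ S, 0 ≤ 1 - x n v := fun v _ => by linarith [(hx n v).2]
      calc P (n + 1) S ≤ (∏ v ∈ S, (1 - x n v)) * P n S := hcond n S
        _ ≤ (∏ v ∈ S, (1 - x n v)) * ∏ v ∈ S, P n {v} := by
            exact mul_le_mul_of_nonneg_left (ih hn S) (Finset.prod_nonneg hnn)
        _ = ∏ v ∈ S, ((1 - x n v) * P n {v}) := (Finset.prod_mul_distrib).symm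
        _ = ∏ v ∈ S, P (n + 1) {v} := Finset.prod_congr rfl (fun v _ => (hmarg n v).symm)
end

section
/- Let Y_1, ..., Y_m be random variables with Y_i ∈ [0,1] that are 1-correlated, i.e., E[∏_{i∈U} Y_i] ≤ ∏_{i∈U} E[Y_i] for every subset U ⊆ [m]. Then for any ε > 0, Pr[∑_i Y_i ≥ (1+ε)·E[∑_i Y_i]] ≤ exp(−ε²·E[∑_i Y_i]/(2+ε)). -/
open MeasureTheory ProbabilityTheory Finset Real

/-! Chernoff's method with `t = log (1 + ε)`. Convexity gives `exp (t y) ≤ 1 + ε y` on `[0,1]`,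
and expanding `∏ i, (1 + ε Yᵢ)` into monomials `ε ^ #U ∏ i ∈ U, Yᵢ` shows that 1-correlation
is exactly what is needed to bound its expectation by `∏ i, (1 + ε 𝔼 Yᵢ) ≤ exp (ε 𝔼 ∑ Yᵢ)`,
just as for independent variables. Markov's inequality and `log (1 + ε) ≥ 2ε / (2 + ε)` finish. -/

theorem Finset.prod_one_add_mul_eq_sum_powerset {ι R : Type*} [CommSemiring R] (s : Finset ι)
    (c : R) (f : ι → R) :
    ∏ i ∈ s, (1 + c * f i) = ∑ U ∈ s.powerset, c ^ #U * ∏ i ∈ U, f i := by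
  simp only [prod_one_add, prod_mul_distrib, prod_const]

theorem Real.exp_mul_le_one_add_mul_exp_sub_one {y : ℝ} (hy : y ∈ Set.Icc (0 : ℝ) 1) (t : ℝ) :
    exp (t * y) ≤ 1 + (exp t - 1) * y := by
  have h := convexOn_exp.2 (Set.mem_univ 0) (Set.mem_univ t) (sub_nonneg.2 hy.2) hy.1
    (sub_add_cancel 1 y)
  simp only [smul_eq_mul, mul_zero, zero_add, exp_zero, mul_one] at h
  rw [mul_comm t]
  linarith

theorem Real.sub_one_add_mul_log_one_add_le {x : ℝ} (hx : 0 ≤ x) :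
    x - (1 + x) * log (1 + x) ≤ -x ^ 2 / (2 + x) := by
  have hlog := mul_le_mul_of_nonneg_left (le_log_one_add_of_nonneg hx)
    (by linarith : 0 ≤ 1 + x)
  have h : x - (1 + x) * (2 * x / (x + 2)) = -x ^ 2 / (2 + x) := by
    field_simp
    ring
  linarith

section OneCorrelated

variable {Ω ι : Type*} [MeasurableSpace Ω] {μ : Measure Ω} [Fintype ι] {Y : ι → Ω → ℝ}

theorem integrable_prod_one_add_mul
    (hint : ∀ U : Finset ι, Integrable (fun ω => ∏ i ∈ U, Y i ω) μ) (c : ℝ) :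
    Integrable (fun ω => ∏ i, (1 + c * Y i ω)) μ := by
  simp_rw [prod_one_add_mul_eq_sum_powerset]
  exact integrable_finsetSum _ fun U _ => (hint U).const_mul _

theorem integral_prod_one_add_mul_le
    (hint : ∀ U : Finset ι, Integrable (fun ω => ∏ i ∈ U, Y i ω) μ)
    (hcorr : ∀ U : Finset ι, ∫ ω, ∏ i ∈ U, Y i ω ∂μ ≤ ∏ i ∈ U, ∫ ω, Y i ω ∂μ)
    {c : ℝ} (hc : 0 ≤ c) :
    ∫ ω, ∏ i, (1 + c * Y i ω) ∂μ ≤ ∏ i, (1 + c * ∫ ω, Y i ω ∂μ) := by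
  simp_rw [prod_one_add_mul_eq_sum_powerset]
  rw [integral_finsetSum _ fun U _ => (hint U).const_mul _]
  gcongr with U
  rw [integral_const_mul]
  gcongr
  exact hcorr U

theorem mgf_sum_le_of_one_correlated [IsFiniteMeasure μ] (hmeas : ∀ i, AEMeasurable (Y i) μ)
    (hbdd : ∀ i ω, Y i ω ∈ Set.Icc (0 : ℝ) 1)
    (hcorr : ∀ U : Finset ι, ∫ ω, ∏ i ∈ U, Y i ω ∂μ ≤ ∏ i ∈ U, ∫ ω, Y i ω ∂μ)
    {t : ℝ} (ht : 0 ≤ t) :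
    mgf (fun ω => ∑ i, Y i ω) μ t ≤ exp ((exp t - 1) * ∑ i, ∫ ω, Y i ω ∂μ) := by
  have hint : ∀ U : Finset ι, Integrable (fun ω => ∏ i ∈ U, Y i ω) μ := fun U =>
    .of_mem_Icc 0 1 (U.aemeasurable_fun_prod fun i _ => hmeas i) <| ae_of_all _ fun ω =>
      ⟨prod_nonneg fun i _ => (hbdd i ω).1,
        prod_le_one (fun i _ => (hbdd i ω).1) fun i _ => (hbdd i ω).2⟩
  have hc : 0 ≤ exp t - 1 := sub_nonneg.2 (one_le_exp ht)
  calc mgf (fun ω => ∑ i, Y i ω) μ t = ∫ ω, ∏ i, exp (t * Y i ω) ∂μ := by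
        simp only [mgf, mul_sum, exp_sum]
    _ ≤ ∫ ω, ∏ i, (1 + (exp t - 1) * Y i ω) ∂μ :=
        integral_mono_of_nonneg (ae_of_all _ fun ω => prod_nonneg fun i _ => (exp_pos _).le)
          (integrable_prod_one_add_mul hint _) <| ae_of_all _ fun ω =>
            prod_le_prod (fun i _ => (exp_pos _).le) fun i _ =>
              exp_mul_le_one_add_mul_exp_sub_one (hbdd i ω) t
    _ ≤ ∏ i, (1 + (exp t - 1) * ∫ ω, Y i ω ∂μ) := integral_prod_one_add_mul_le hint hcorr hc
    _ ≤ ∏ i, exp ((exp t - 1) * ∫ ω, Y i ω ∂μ) := by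
        refine prod_le_prod (fun i _ => ?_) fun i _ => ?_
        · exact add_nonneg zero_le_one <| mul_nonneg hc <| integral_nonneg fun ω => (hbdd i ω).1
        · linarith [add_one_le_exp ((exp t - 1) * ∫ ω, Y i ω ∂μ)]
    _ = exp ((exp t - 1) * ∑ i, ∫ ω, Y i ω ∂μ) := by rw [mul_sum, exp_sum]

end OneCorrelated

/-- Chernoff bound for 1-correlated random variables in `[0,1]`
(Panconesi–Srinivasan). -/
theorem chernoff_one_correlated {Ω : Type*} [MeasurableSpace Ω]
    (μ : Measure Ω) [IsProbabilityMeasure μ] (m : ℕ) (Y : Fin m → Ω → ℝ)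
    (hmeas : ∀ i, Measurable (Y i))
    (hbdd : ∀ i ω, Y i ω ∈ Set.Icc (0 : ℝ) 1)
    (hcorr : ∀ U : Finset (Fin m),
      (∫ ω, ∏ i ∈ U, Y i ω ∂μ) ≤ ∏ i ∈ U, ∫ ω, Y i ω ∂μ)
    (ε : ℝ) (hε : 0 < ε) :
    (μ {ω | (1 + ε) * (∑ i, ∫ ω', Y i ω' ∂μ) ≤ ∑ i, Y i ω}).toReal ≤
      Real.exp (-(ε ^ 2 * (∑ i, ∫ ω', Y i ω' ∂μ)) / (2 + ε)) := by
  set M := ∑ i, ∫ ω', Y i ω' ∂μ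
  set t := log (1 + ε)
  have hM : 0 ≤ M := sum_nonneg fun i _ => integral_nonneg fun ω => (hbdd i ω).1
  have ht : 0 ≤ t := log_nonneg (by linarith)
  have hexp : exp t - 1 = ε := by rw [exp_log (by linarith)]; ring
  have hsum : AEMeasurable (fun ω => ∑ i, Y i ω) μ :=
    (Finset.measurable_sum _ fun i _ => hmeas i).aemeasurable
  have hint : Integrable (fun ω => exp (t * ∑ i, Y i ω)) μ :=
    integrable_exp_mul_of_le t m ht hsum <| ae_of_all _ fun ω =>
      (sum_le_sum fun i _ => (hbdd i ω).2).trans (by simp)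
  calc (μ {ω | (1 + ε) * M ≤ ∑ i, Y i ω}).toReal
      ≤ exp (-t * ((1 + ε) * M)) * mgf (fun ω => ∑ i, Y i ω) μ t :=
        measure_ge_le_exp_mul_mgf _ ht hint
    _ ≤ exp (-t * ((1 + ε) * M)) * exp (ε * M) := by
        gcongr
        simpa only [hexp] using
          mgf_sum_le_of_one_correlated (fun i => (hmeas i).aemeasurable) hbdd hcorr ht
    _ = exp ((ε - (1 + ε) * t) * M) := by rw [← exp_add]; ring_nf
    _ ≤ exp (-ε ^ 2 / (2 + ε) * M) :=
        exp_le_exp.2 <| mul_le_mul_of_nonneg_right (sub_one_add_mul_log_one_add_le hε.le) hM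
    _ = exp (-(ε ^ 2 * M) / (2 + ε)) := by ring_nf
end
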